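/- Let m, K, q, r be natural numbers with 0 ≤ q ≤ K, 0 ≤ r ≤ K, K ≥ 1, let ω_1, …, ω_q ≥ 0 and γ_1, …, γ_r > 0 be real numbers. Define the K×K matrices M₁(λ) with entries M₁_{i,j} = λ_i^{j−1} for 1 ≤ j ≤ K−r and M₁_{i,j} = (1 + γ_{j−(K−r)}·λ_i)^K for K−r < j ≤ K, and M₂(λ) with entries M₂_{i,j} = λ_i^{j−1} for 1 ≤ j ≤ K−q and M₂_{i,j} = F_m(ω_{j−(K−q)}·λ_i) for K−q < j ≤ K. Then ∫_{[0,∞)^K} det M₂(λ) · det M₁(λ) · Π_{i=1}^K λ_i^m e^{−λ_i} dλ = K! · det C, where C is the K×K matrix whose (i,j) entry equals: (m+i+j−2)! if i ≤ K−q and j ≤ K−r; Σ_{n=0}^K binom(K,n)·(m+i+n−1)!·γ_{j−(K−r)}^n if i ≤ K−q and j > K−r; b_m(j−1, ω_{i−(K−q)}) if i > K−q and j ≤ K−r; and Σ_{n=0}^K binom(K,n)·b_m(n, ω_{i−(K−q)})·γ_{j−(K−r)}^n if i > K−q and j > K−r. -/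

import Mathlib

open MeasureTheory

/-- The entire function `F_m(y) = ∑_{k=0}^∞ (m! / ((m+k)! k!)) y^k`
(a normalized `₀F₁` hypergeometric-type series scaled by `m!`). -/
noncomputable def F (m : ℕ) (y : ℝ) : ℝ :=
  ∑' k : ℕ, ((m.factorial : ℝ) / ((m + k).factorial * k.factorial)) * y ^ k

/-- `b_m(n, ω) = e^ω ∑_{k=0}^n (n! (m+n)! m! / ((n-k)! k! (m+k)!)) ω^k`. -/
noncomputable def b (m n : ℕ) (ω : ℝ) : ℝ :=
  Real.exp ω * ∑ k ∈ Finset.range (n + 1),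
    ((n.factorial : ℝ) * (m + n).factorial * m.factorial /
      ((n - k).factorial * k.factorial * (m + k).factorial)) * ω ^ k

/-!
By Andréief's identity the `K`-fold integral of a product of two determinants is `K!` times
the determinant of the matrix of integrals `∫ fᵢ gⱼ w`, with `w(x) = x^m e^{-x}` on `[0, ∞)`.
Every entry then reduces to Gamma moments `∫ x^n w = (m+n)!`: the columns in `γ` through the
binomial expansion of `(1 + γx)^K`, and the rows in `ω` through termwise integration of the
series of `F_m(ωx)`, which gives `∑ₚ m! (p+m+n)! / ((m+p)! p!) ωᵖ`. That series is `b_m(n, ω)`: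
multiplying the polynomial part of `b_m(n, ω)` by the exponential series, the coefficient of `ωᵖ`
is a Vandermonde convolution.
-/

open Finset Real

section Andreief

open Equiv

variable {ι : Type*} [Fintype ι] [DecidableEq ι]

lemma Matrix.det_mul_det_eq_sum_sum {R : Type*} [CommRing R] (A B : Matrix ι ι R) :
    A.det * B.det = ∑ σ : Perm ι, ∑ τ : Perm ι,
      (Perm.sign σ : R) * Perm.sign τ * ∏ i, A i (σ i) * B i (τ i) := by
  rw [← det_transpose A, ← det_transpose B, det_apply', det_apply', sum_mul_sum]
  exact sum_congr rfl fun σ _ => sum_congr rfl fun τ _ => by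
    simp only [transpose_apply, prod_mul_distrib]; ring

lemma Matrix.sum_sum_sign_mul_sign_mul_prod {R : Type*} [CommRing R] (C : Matrix ι ι R) :
    ∑ σ : Perm ι, ∑ τ : Perm ι, (Perm.sign σ : R) * Perm.sign τ * ∏ i, C (σ i) (τ i) =
      (Fintype.card ι).factorial * C.det := by
  have hσ : ∀ σ : Perm ι,
      ∑ τ : Perm ι, (Perm.sign σ : R) * Perm.sign τ * ∏ i, C (σ i) (τ i) = C.det := by
    intro σ
    have hrow : ∑ τ : Perm ι, (Perm.sign τ : R) * ∏ i, C (σ i) (τ i) = Perm.sign σ * C.det := by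
      rw [← det_permute, ← det_transpose, det_apply']
      rfl
    simp_rw [mul_assoc, ← mul_sum, hrow, ← mul_assoc, ← Int.cast_mul, ← Units.val_mul,
      Int.units_mul_self, Units.val_one, Int.cast_one, one_mul]
  simp_rw [hσ, sum_const, card_univ, Fintype.card_perm, nsmul_eq_mul]

variable {α 𝕜 : Type*} [MeasurableSpace α] {μ : Measure α} [SigmaFinite μ] [RCLike 𝕜]

theorem MeasureTheory.integral_det_mul_det (f g : ι → α → 𝕜)
    (hfg : ∀ i j, Integrable (fun x => f i x * g j x) μ) :
    ∫ x : ι → α, (Matrix.of fun i j => f j (x i)).det * (Matrix.of fun i j => g j (x i)).det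
        ∂(Measure.pi fun _ => μ) =
      ((Fintype.card ι).factorial : 𝕜) * (Matrix.of fun i j => ∫ x, f i x * g j x ∂μ).det := by
  have hprod : ∀ σ τ : Perm ι, Integrable (fun x : ι → α => ∏ i, f (σ i) (x i) * g (τ i) (x i))
      (Measure.pi fun _ => μ) := fun σ τ =>
    .fintype_prod (f := fun i y => f (σ i) y * g (τ i) y) fun i => hfg _ _
  simp_rw [Matrix.det_mul_det_eq_sum_sum, Matrix.of_apply]
  rw [← Matrix.sum_sum_sign_mul_sign_mul_prod, integral_finsetSum _ fun σ _ =>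
    integrable_finsetSum _ fun τ _ => (hprod σ τ).const_mul _]
  refine sum_congr rfl fun σ _ => ?_
  rw [integral_finsetSum _ fun τ _ => (hprod σ τ).const_mul _]
  refine sum_congr rfl fun τ _ => ?_
  rw [integral_const_mul, integral_fintype_prod_eq_prod (f := fun i y => f (σ i) y * g (τ i) y)]
  simp only [Matrix.of_apply]

theorem MeasureTheory.setIntegral_det_mul_det_mul_prod (s : Set α) (f g : ι → α → 𝕜) (w : α → 𝕜)
    (hfg : ∀ i j, IntegrableOn (fun x => f i x * g j x * w x) s μ) :
    ∫ x in Set.univ.pi fun _ => s, (Matrix.of fun i j => f j (x i)).det *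
        (Matrix.of fun i j => g j (x i)).det * ∏ i, w (x i) ∂(Measure.pi fun _ => μ) =
      ((Fintype.card ι).factorial : 𝕜) *
        (Matrix.of fun i j => ∫ x in s, f i x * g j x * w x ∂μ).det := by
  rw [Measure.restrict_pi_pi]
  calc _ = ∫ x : ι → α, (Matrix.of fun i j => w (x i) * f j (x i)).det *
        (Matrix.of fun i j => g j (x i)).det ∂(Measure.pi fun _ => μ.restrict s) := by
        refine integral_congr_ae (ae_of_all _ fun x => ?_)
        have hw := Matrix.det_mul_column (fun i => w (x i)) (Matrix.of fun i j => f j (x i))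
        simp only [Matrix.of_apply] at hw
        simp only [hw]
        ring
    _ = _ := by
        rw [integral_det_mul_det (fun j x => w x * f j x) g
          fun i j => (hfg i j).congr (ae_of_all _ fun x => by ring)]
        simp only [mul_comm (w _), mul_assoc]

end Andreief

theorem MeasureTheory.Integrable.of_hasSum {α E : Type*} [MeasurableSpace α] {μ : Measure α}
    [NormedAddCommGroup E] {ι : Type*} [Countable ι] {F : ι → α → E} {f : α → E}
    (hf : AEStronglyMeasurable f μ) (hF_int : ∀ i, Integrable (F i) μ)
    (hF_sum : Summable fun i => ∫ a, ‖F i a‖ ∂μ)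
    (hFf : ∀ᵐ a ∂μ, HasSum (fun i => F i a) (f a)) : Integrable f μ := by
  refine ⟨hf, ?_⟩
  calc ∫⁻ a, ‖f a‖ₑ ∂μ ≤ ∫⁻ a, ∑' i, ‖F i a‖ₑ ∂μ :=
        lintegral_mono_ae <| hFf.mono fun a ha => ha.tsum_eq ▸ enorm_tsum_le_tsum_enorm
    _ = ∑' i, ENNReal.ofReal (∫ a, ‖F i a‖ ∂μ) := by
        rw [lintegral_tsum fun i => (hF_int i).aestronglyMeasurable.enorm]
        exact tsum_congr fun i => (ofReal_integral_norm_eq_lintegral_enorm (hF_int i)).symm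
    _ < ⊤ := by
        rw [← ENNReal.ofReal_tsum_of_nonneg (fun i => integral_nonneg fun a => norm_nonneg _)
          hF_sum]
        exact ENNReal.ofReal_lt_top

section Binomial

variable {μ : Measure ℝ} {φ ψ : ℝ → ℝ} (γ : ℝ) (K : ℕ)

lemma mul_one_add_mul_pow_mul_eq_sum (x : ℝ) :
    φ x * (1 + γ * x) ^ K * ψ x =
      ∑ n ∈ range (K + 1), (K.choose n * γ ^ n) * (φ x * x ^ n * ψ x) := by
  rw [add_comm, add_pow, mul_sum, sum_mul]
  exact sum_congr rfl fun n _ => by ring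

lemma integrable_mul_one_add_mul_pow_mul (h : ∀ n, Integrable (fun x => φ x * x ^ n * ψ x) μ) :
    Integrable (fun x => φ x * (1 + γ * x) ^ K * ψ x) μ := by
  simp only [mul_one_add_mul_pow_mul_eq_sum]
  exact integrable_finsetSum _ fun n _ => (h n).const_mul _

lemma integral_mul_one_add_mul_pow_mul (h : ∀ n, Integrable (fun x => φ x * x ^ n * ψ x) μ) :
    ∫ x, φ x * (1 + γ * x) ^ K * ψ x ∂μ =
      ∑ n ∈ range (K + 1), K.choose n * (∫ x, φ x * x ^ n * ψ x ∂μ) * γ ^ n := by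
  simp only [mul_one_add_mul_pow_mul_eq_sum]
  rw [integral_finsetSum _ fun n _ => (h n).const_mul _]
  exact sum_congr rfl fun n _ => by rw [integral_const_mul]; ring

end Binomial

lemma integrableOn_pow_mul_exp_neg (n : ℕ) :
    IntegrableOn (fun x : ℝ => x ^ n * exp (-x)) (Set.Ici 0) := by
  rw [integrableOn_Ici_iff_integrableOn_Ioi]
  refine (GammaIntegral_convergent (s := n + 1) (by positivity)).congr_fun
    (fun x _ => ?_) measurableSet_Ioi
  simp [mul_comm]

lemma integral_pow_mul_exp_neg (n : ℕ) :
    ∫ x in Set.Ici (0 : ℝ), x ^ n * exp (-x) = n.factorial := by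
  rw [integral_Ici_eq_integral_Ioi, ← Gamma_nat_eq_factorial, Gamma_eq_integral (by positivity)]
  refine setIntegral_congr_fun measurableSet_Ioi fun x _ => ?_
  simp [mul_comm]

lemma integrableOn_pow_mul_pow_mul_exp_neg (m i j : ℕ) :
    IntegrableOn (fun x : ℝ => x ^ i * x ^ j * (x ^ m * exp (-x))) (Set.Ici 0) :=
  (integrableOn_pow_mul_exp_neg (m + i + j)).congr (ae_of_all _ fun x => by ring)

lemma integral_pow_mul_pow_mul_exp_neg (m i j : ℕ) :
    ∫ x in Set.Ici (0 : ℝ), x ^ i * x ^ j * (x ^ m * exp (-x)) = (m + i + j).factorial := by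
  rw [← integral_pow_mul_exp_neg]
  exact integral_congr_ae (ae_of_all _ fun x => by ring)

lemma summable_F (m : ℕ) (y : ℝ) :
    Summable fun k : ℕ => ((m.factorial : ℝ) / ((m + k).factorial * k.factorial)) * y ^ k := by
  refine .of_norm_bounded (summable_pow_div_factorial |y|) fun k => ?_
  have hcoeff : (m.factorial : ℝ) / ((m + k).factorial * k.factorial) ≤ 1 / k.factorial := by
    rw [div_le_div_iff₀ (by positivity) (by positivity), one_mul]
    gcongr
    omega
  rw [norm_mul, norm_pow, norm_eq_abs, norm_eq_abs, abs_of_nonneg (by positivity)]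
  calc _ ≤ 1 / k.factorial * |y| ^ k := by gcongr
    _ = |y| ^ k / k.factorial := one_div_mul_eq_div _ _

@[fun_prop]
lemma measurable_F (m : ℕ) : Measurable (F m) :=
  measurable_of_tendsto_metrizable (fun N => by fun_prop)
    (tendsto_pi_nhds.mpr fun y => (summable_F m y).hasSum.tendsto_sum_nat)

lemma sum_range_choose_mul_choose_sub (a c n : ℕ) :
    ∑ k ∈ range (n + 1), a.choose k * c.choose (n - k) = (a + c).choose n := by
  rw [Nat.add_choose_eq, Nat.sum_antidiagonal_eq_sum_range_succ_mk]

lemma b_coeff_div_factorial_eq {m n k : ℕ} (p : ℕ) (hk : k ≤ n) :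
    (if k ≤ p then (n.factorial : ℝ) * (m + n).factorial * m.factorial /
        ((n - k).factorial * k.factorial * (m + k).factorial) / (p - k).factorial else 0) =
      m.factorial * n.factorial / p.factorial * (p.choose k * (m + n).choose (n - k) : ℕ) := by
  split_ifs with hkp
  · have hmk : m + n - (n - k) = m + k := by omega
    rw [Nat.cast_mul, Nat.cast_choose ℝ hkp, Nat.cast_choose ℝ (by omega : n - k ≤ m + n), hmk]
    field_simp
  · simp [Nat.choose_eq_zero_of_lt (not_le.mp hkp)]

lemma sum_b_coeff_div_factorial (m n p : ℕ) :
    ∑ k ∈ range (n + 1), (if k ≤ p then (n.factorial : ℝ) * (m + n).factorial * m.factorial /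
        ((n - k).factorial * k.factorial * (m + k).factorial) / (p - k).factorial else 0) =
      m.factorial / ((m + p).factorial * p.factorial) * (p + (m + n)).factorial := by
  rw [sum_congr rfl fun k hk => b_coeff_div_factorial_eq p (Nat.lt_succ_iff.mp (mem_range.mp hk)),
    ← mul_sum, ← Nat.cast_sum, sum_range_choose_mul_choose_sub,
    Nat.cast_choose ℝ (by omega : n ≤ p + (m + n)), show p + (m + n) - n = m + p by omega]
  field_simp

lemma hasSum_b (m n : ℕ) (ω : ℝ) :
    HasSum (fun p : ℕ => (m.factorial : ℝ) / ((m + p).factorial * p.factorial) *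
      (p + (m + n)).factorial * ω ^ p) (b m n ω) := by
  set A : ℕ → ℝ := fun k => (n.factorial : ℝ) * (m + n).factorial * m.factorial /
    ((n - k).factorial * k.factorial * (m + k).factorial)
  have hshift : ∀ k, HasSum (fun p => if k ≤ p then A k / (p - k).factorial * ω ^ p else 0)
      (A k * ω ^ k * exp ω) := by
    intro k
    rw [← (add_left_injective k).hasSum_iff fun p hp =>
      if_neg fun hkp => hp ⟨p - k, Nat.sub_add_cancel hkp⟩]
    have hexp : HasSum (fun l => ω ^ l / l.factorial) (exp ω) := by
      rw [exp_eq_exp_ℝ]; exact NormedSpace.expSeries_div_hasSum_exp ω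
    have hcomp : (fun p => if k ≤ p then A k / (p - k).factorial * ω ^ p else 0) ∘ (· + k) =
        fun l => A k * ω ^ k * (ω ^ l / l.factorial) := by
      funext l
      simp [pow_add]
      ring
    exact hcomp ▸ hexp.mul_left (A k * ω ^ k)
  convert hasSum_sum fun k (_ : k ∈ range (n + 1)) => hshift k using 1
  · funext p
    rw [← sum_b_coeff_div_factorial, sum_mul]
    exact sum_congr rfl fun k _ => by split_ifs <;> simp [A]
  · rw [b, mul_sum]
    exact sum_congr rfl fun k _ => by ring

section FMoment

variable (m n : ℕ) (ω : ℝ)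

lemma integrableOn_F_term (k : ℕ) :
    IntegrableOn (fun x : ℝ => (m.factorial : ℝ) / ((m + k).factorial * k.factorial) *
      (ω * x) ^ k * (x ^ n * (x ^ m * exp (-x)))) (Set.Ici 0) := by
  refine ((integrableOn_pow_mul_exp_neg (k + (m + n))).const_mul
    ((m.factorial : ℝ) / ((m + k).factorial * k.factorial) * ω ^ k)).congr
    (ae_of_all _ fun x => by ring)

lemma integral_F_term (k : ℕ) :
    ∫ x in Set.Ici (0 : ℝ), (m.factorial : ℝ) / ((m + k).factorial * k.factorial) *
      (ω * x) ^ k * (x ^ n * (x ^ m * exp (-x))) =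
      (m.factorial : ℝ) / ((m + k).factorial * k.factorial) * (k + (m + n)).factorial * ω ^ k := by
  calc _ = ∫ x in Set.Ici (0 : ℝ), (m.factorial : ℝ) / ((m + k).factorial * k.factorial) *
          ω ^ k * (x ^ (k + (m + n)) * exp (-x)) :=
        integral_congr_ae (ae_of_all _ fun x => by ring)
    _ = _ := by rw [integral_const_mul, integral_pow_mul_exp_neg]; ring

lemma summable_integral_norm_F_term :
    Summable fun k => ∫ x in Set.Ici (0 : ℝ),
      ‖(m.factorial : ℝ) / ((m + k).factorial * k.factorial) * (ω * x) ^ k *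
        (x ^ n * (x ^ m * exp (-x)))‖ := by
  refine (hasSum_b m n |ω|).summable.congr fun k => ?_
  rw [← integral_F_term]
  refine setIntegral_congr_fun measurableSet_Ici fun x (hx : 0 ≤ x) => ?_
  rw [eq_comm, norm_eq_abs]
  simp only [abs_mul, abs_pow, abs_div, Nat.abs_cast, abs_of_nonneg hx, abs_of_pos (exp_pos _)]

lemma hasSum_F_term (x : ℝ) :
    HasSum (fun k => (m.factorial : ℝ) / ((m + k).factorial * k.factorial) *
      (ω * x) ^ k * (x ^ n * (x ^ m * exp (-x)))) (F m (ω * x) * x ^ n * (x ^ m * exp (-x))) := by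
  rw [mul_assoc]
  exact (summable_F m (ω * x)).hasSum.mul_right _

lemma integrableOn_F_mul_pow_mul_exp_neg :
    IntegrableOn (fun x => F m (ω * x) * x ^ n * (x ^ m * exp (-x))) (Set.Ici 0) := by
  exact .of_hasSum (by fun_prop) (integrableOn_F_term m n ω) (summable_integral_norm_F_term m n ω)
    (ae_of_all _ (hasSum_F_term m n ω))

lemma integral_F_mul_pow_mul_exp_neg :
    ∫ x in Set.Ici (0 : ℝ), F m (ω * x) * x ^ n * (x ^ m * exp (-x)) = b m n ω := by
  have h := hasSum_integral_of_summable_integral_norm (integrableOn_F_term m n ω)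
    (summable_integral_norm_F_term m n ω)
  simp only [integral_F_term, fun x => (hasSum_F_term m n ω x).tsum_eq] at h
  exact h.unique (hasSum_b m n ω)

end FMoment

/-- Evaluation of the integral `ℱ_1^{(1)}` (equation (41)) in Appendix A of the paper:
`∫_{[0,∞)^K} det M₂(λ) · det M₁(λ) · ∏ λ_i^m e^{-λ_i} dλ = K! det C`
(stated with 0-based indices). -/
theorem stmt8 (m K q r : ℕ) (ω : Fin q → ℝ) (γ : Fin r → ℝ) :
    (∫ lam : Fin K → ℝ in Set.univ.pi fun _ => Set.Ici (0 : ℝ),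
        (Matrix.of fun i j : Fin K =>
          if h : (j : ℕ) < K - q then lam i ^ (j : ℕ)
          else F m (ω ⟨(j : ℕ) - (K - q), by have := j.isLt; omega⟩ * lam i)).det *
        (Matrix.of fun i j : Fin K =>
          if h : (j : ℕ) < K - r then lam i ^ (j : ℕ)
          else (1 + γ ⟨(j : ℕ) - (K - r), by have := j.isLt; omega⟩ * lam i) ^ K).det *
        ∏ i, lam i ^ m * Real.exp (-(lam i))
        ∂(Measure.pi fun _ => (volume : Measure ℝ)))
      = (K.factorial : ℝ) *
        (Matrix.of fun i j : Fin K =>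
          if hi : (i : ℕ) < K - q then
            if hj : (j : ℕ) < K - r then ((m + (i : ℕ) + (j : ℕ)).factorial : ℝ)
            else ∑ n ∈ Finset.range (K + 1),
              (K.choose n : ℝ) * ((m + (i : ℕ) + n).factorial : ℝ) *
                γ ⟨(j : ℕ) - (K - r), by have := j.isLt; omega⟩ ^ n
          else
            if hj : (j : ℕ) < K - r then
              b m (j : ℕ) (ω ⟨(i : ℕ) - (K - q), by have := i.isLt; omega⟩)
            else ∑ n ∈ Finset.range (K + 1),
              (K.choose n : ℝ) * b m n (ω ⟨(i : ℕ) - (K - q), by have := i.isLt; omega⟩) *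
                γ ⟨(j : ℕ) - (K - r), by have := j.isLt; omega⟩ ^ n).det := by
  refine (setIntegral_det_mul_det_mul_prod (μ := volume) (Set.Ici 0)
    (fun (j : Fin K) x => if h : (j : ℕ) < K - q then x ^ (j : ℕ)
      else F m (ω ⟨(j : ℕ) - (K - q), by have := j.isLt; omega⟩ * x))
    (fun (j : Fin K) x => if h : (j : ℕ) < K - r then x ^ (j : ℕ)
      else (1 + γ ⟨(j : ℕ) - (K - r), by have := j.isLt; omega⟩ * x) ^ K)
    (fun x => x ^ m * exp (-x)) fun i j => ?_).trans ?_
  · by_cases hi : (i : ℕ) < K - q <;> by_cases hj : (j : ℕ) < K - r <;>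
      simp only [hi, hj, dite_true, dite_false]
    · exact integrableOn_pow_mul_pow_mul_exp_neg m i j
    · exact integrable_mul_one_add_mul_pow_mul _ _ (integrableOn_pow_mul_pow_mul_exp_neg m i)
    · exact integrableOn_F_mul_pow_mul_exp_neg m j _
    · exact integrable_mul_one_add_mul_pow_mul _ _ (integrableOn_F_mul_pow_mul_exp_neg m · _)
  · rw [Fintype.card_fin]
    congr 2
    ext i j
    by_cases hi : (i : ℕ) < K - q <;> by_cases hj : (j : ℕ) < K - r <;>
      simp only [Matrix.of_apply, hi, hj, dite_true, dite_false]
    · exact integral_pow_mul_pow_mul_exp_neg m i j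
    · simp only [integral_mul_one_add_mul_pow_mul _ _ (integrableOn_pow_mul_pow_mul_exp_neg m i),
        integral_pow_mul_pow_mul_exp_neg]
    · exact integral_F_mul_pow_mul_exp_neg m j _
    · simp only [integral_mul_one_add_mul_pow_mul _ _ (integrableOn_F_mul_pow_mul_exp_neg m · _),
        integral_F_mul_pow_mul_exp_neg]
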